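/- Let 0 < T⁻ ≤ 1 ≤ T⁺ with T⁺ - 1 - ln T⁺ = T⁻ - 1 - ln T⁻, and let c_k ≥ 0 (k=1,…,N) with ∑ c_k > 0. Define A(T,t) = ∑_k (1 + (T-1)e^{-2μ_k t}) c_k (μ_k > 0) and D(T,t) = (3/2)·[A(T,t)/A(1,0) - 1 - ln(A(T,t)/A(1,0))]. Then D(T⁺, t) ≥ D(T⁻, t) for all t ≥ 0. -/

import Mathlib

/-!
Write `φ x = x - 1 - log x` and `s = (∑ₖ e^{-2μₖt} cₖ) / ∑ₖ cₖ ∈ [0, 1]`; then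
`A(T,t) / A(1,0) = 1 + (T - 1) s` is affine in `T`. The map `T ↦ φ(1 + (T - 1) s) - s² φ(T)`
has derivative `s² (T - 1)² (1 - s) / (T (1 + (T - 1) s)) ≥ 0`, so it is monotone on `T > 0`.
Comparing it at `T⁻ ≤ T⁺`, where `φ` takes equal values, gives the claim.
-/

open Real Set

/-- The Itakura–Saito divergence of `x` from `1`; the paper's `D(T,t)` is
`(3/2) * itakuraSaito (A(T,t) / A(1,0))`. -/
noncomputable def itakuraSaito (x : ℝ) : ℝ := x - 1 - log x

lemma hasDerivAt_itakuraSaito {x : ℝ} (hx : x ≠ 0) :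
    HasDerivAt itakuraSaito (1 - x⁻¹) x :=
  ((hasDerivAt_id x).sub_const 1).sub (hasDerivAt_log hx)

lemma one_add_sub_one_mul_pos {T s : ℝ} (hT : 0 < T) (hs : s ∈ Icc (0 : ℝ) 1) :
    0 < 1 + (T - 1) * s := by
  rcases hs.2.lt_or_eq with hs1 | rfl
  · nlinarith [hs.1]
  · linarith

lemma monotoneOn_itakuraSaito_interp_sub {s : ℝ} (hs : s ∈ Icc (0 : ℝ) 1) :
    MonotoneOn (fun T => itakuraSaito (1 + (T - 1) * s) - s ^ 2 * itakuraSaito T) (Ioi 0) := by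
  have hderiv : ∀ T ∈ Ioi (0 : ℝ), HasDerivAt
      (fun T => itakuraSaito (1 + (T - 1) * s) - s ^ 2 * itakuraSaito T)
      ((1 - (1 + (T - 1) * s)⁻¹) * s - s ^ 2 * (1 - T⁻¹)) T := by
    intro T hT
    have hinner : HasDerivAt (fun T => 1 + (T - 1) * s) s T := by
      simpa using (((hasDerivAt_id T).sub_const 1).mul_const s).const_add 1
    exact ((hasDerivAt_itakuraSaito (one_add_sub_one_mul_pos hT hs).ne').comp T hinner).sub
      ((hasDerivAt_itakuraSaito (ne_of_gt hT)).const_mul _)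
  refine monotoneOn_of_hasDerivWithinAt_nonneg (convex_Ioi 0)
    (fun T hT => (hderiv T hT).continuousAt.continuousWithinAt)
    (fun T hT => (hderiv T (interior_subset hT)).hasDerivWithinAt) fun T hT => ?_
  rw [interior_Ioi, mem_Ioi] at hT
  have hy := one_add_sub_one_mul_pos hT hs
  have hform : (1 - (1 + (T - 1) * s)⁻¹) * s - s ^ 2 * (1 - T⁻¹)
      = s ^ 2 * (T - 1) ^ 2 * (1 - s) / (T * (1 + (T - 1) * s)) := by
    field_simp
    ring
  rw [hform]
  have := sub_nonneg.2 hs.2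
  positivity

lemma itakuraSaito_interp_le_of_eq {Tm Tp s : ℝ} (hTm : 0 < Tm) (hle : Tm ≤ Tp)
    (heq : itakuraSaito Tp = itakuraSaito Tm) (hs : s ∈ Icc (0 : ℝ) 1) :
    itakuraSaito (1 + (Tm - 1) * s) ≤ itakuraSaito (1 + (Tp - 1) * s) := by
  have := monotoneOn_itakuraSaito_interp_sub hs hTm (hTm.trans_le hle) hle
  simp only [heq] at this
  linarith

lemma sum_one_add_mul_mul_div_sum {ι : Type*} [Fintype ι] (a : ℝ) (w c : ι → ℝ)
    (hc : ∑ k, c k ≠ 0) :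
    (∑ k, (1 + a * w k) * c k) / ∑ k, c k = 1 + a * ((∑ k, w k * c k) / ∑ k, c k) := by
  simp only [add_mul, one_mul, Finset.sum_add_distrib, mul_assoc, ← Finset.mul_sum]
  field_simp

lemma sum_mul_div_sum_mem_Icc {ι : Type*} [Fintype ι] {w c : ι → ℝ}
    (hw : ∀ k, w k ∈ Icc (0 : ℝ) 1) (hc : ∀ k, 0 ≤ c k) :
    (∑ k, w k * c k) / ∑ k, c k ∈ Icc (0 : ℝ) 1 := by
  have hsum_le : ∑ k, w k * c k ≤ ∑ k, c k :=
    Finset.sum_le_sum fun k _ => mul_le_of_le_one_left (hc k) (hw k).2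
  refine ⟨div_nonneg (Finset.sum_nonneg fun k _ => mul_nonneg (hw k).1 (hc k))
    (Finset.sum_nonneg fun k _ => hc k), div_le_one_of_le₀ hsum_le
    (Finset.sum_nonneg fun k _ => hc k)⟩

theorem nonMarkovian_uphill_faster (Tm Tp : ℝ) (hTm : 0 < Tm) (hTm1 : Tm ≤ 1)
    (hTp1 : 1 ≤ Tp)
    (heq : Tp - 1 - Real.log Tp = Tm - 1 - Real.log Tm)
    (N : ℕ) (c μ : Fin N → ℝ) (hc : ∀ k, 0 ≤ c k) (hcsum : 0 < ∑ k, c k)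
    (hμ : ∀ k, 0 < μ k) :
    ∀ t : ℝ, 0 ≤ t →
      (3 / 2 : ℝ) *
          ((∑ k, (1 + (Tp - 1) * Real.exp (-2 * μ k * t)) * c k) / (∑ k, c k) - 1 -
            Real.log ((∑ k, (1 + (Tp - 1) * Real.exp (-2 * μ k * t)) * c k) / (∑ k, c k))) ≥
      (3 / 2 : ℝ) *
          ((∑ k, (1 + (Tm - 1) * Real.exp (-2 * μ k * t)) * c k) / (∑ k, c k) - 1 -
            Real.log ((∑ k, (1 + (Tm - 1) * Real.exp (-2 * μ k * t)) * c k) / (∑ k, c k))) := by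
  intro t ht
  have hweight : ∀ k, exp (-2 * μ k * t) ∈ Icc (0 : ℝ) 1 := fun k =>
    ⟨(exp_pos _).le, exp_le_one_iff.2 (by nlinarith [hμ k])⟩
  have hs := sum_mul_div_sum_mem_Icc hweight hc
  have hle := itakuraSaito_interp_le_of_eq hTm (hTm1.trans hTp1) heq hs
  rw [sum_one_add_mul_mul_div_sum _ _ _ hcsum.ne', sum_one_add_mul_mul_div_sum _ _ _ hcsum.ne']
  unfold itakuraSaito at hle
  linarith
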